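/- arXiv:2306.11143 — 3 statements merged into one kernel-verified Lean document; each statement's English description precedes it below -/
import Mathlib

section
/- The asymptotic MSE of the bivariate linear regression on φ₁, φ₂ is at most that of the univariate regression on h(φ₁,φ₂) if and only if σ²/(σ²_f(n−1)) ≥ (ρ²_{φ₁,f} + ρ²_{φ₂,f} − 2ρ_{φ₁,f}ρ_{φ₂,f}ρ_{φ₁,φ₂})/(1 − ρ²_{φ₁,φ₂}) − ρ²_{f,h}, where ρ denotes Pearson correlation. -/
/-!
Every correlation is a covariance divided by the square roots of two variances, so each
squared correlation, and the triple product `ρ_{φ₁,f} ρ_{φ₂,f} ρ_{φ₁,φ₂}`, is a rational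
function of the covariances in which the square roots cancel. Clearing denominators, the
correlation form of the right-hand side is exactly `Δ_bias / σ²_f`, and dividing the
inequality `Δ_var ≥ Δ_bias` by `σ²_f > 0` gives the claim.
-/

namespace Pearson

/-- The Pearson correlation of two variables with covariance `c` and variances `a`, `b`. -/
noncomputable def corr (c a b : ℝ) : ℝ := c / (Real.sqrt a * Real.sqrt b)

variable {a b f : ℝ}

theorem corr_sq (c : ℝ) (ha : 0 ≤ a) (hb : 0 ≤ b) : corr c a b ^ 2 = c ^ 2 / (a * b) := by
  rw [corr, div_pow, mul_pow, Real.sq_sqrt ha, Real.sq_sqrt hb]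

theorem corr_mul_corr_mul_corr (c₁ c₂ c₁₂ : ℝ) (ha : 0 ≤ a) (hb : 0 ≤ b) (hf : 0 ≤ f) :
    corr c₁ a f * corr c₂ b f * corr c₁₂ a b = c₁ * c₂ * c₁₂ / (a * b * f) := by
  have hsqrt : Real.sqrt a * Real.sqrt f * (Real.sqrt b * Real.sqrt f) * (Real.sqrt a * Real.sqrt b)
      = Real.sqrt a ^ 2 * Real.sqrt b ^ 2 * Real.sqrt f ^ 2 := by
    ring
  rw [corr, corr, corr, div_mul_div_comm, div_mul_div_comm, hsqrt,
    Real.sq_sqrt ha, Real.sq_sqrt hb, Real.sq_sqrt hf]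

theorem sq_lt_mul_of_corr_sq_lt_one {c : ℝ} (ha : 0 < a) (hb : 0 < b)
    (h : corr c a b ^ 2 < 1) : c ^ 2 < a * b := by
  rwa [corr_sq c ha.le hb.le, div_lt_one (mul_pos ha hb)] at h

theorem corr_bias_gap_eq_div {s₁ s₂ sh sf : ℝ} (c₁ c₂ c₁₂ ch : ℝ)
    (hs₁ : 0 < s₁) (hs₂ : 0 < s₂) (hsh : 0 < sh) (hsf : 0 < sf)
    (hcorr : corr c₁₂ s₁ s₂ ^ 2 < 1) :
    (corr c₁ s₁ sf ^ 2 + corr c₂ s₂ sf ^ 2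
          - 2 * corr c₁ s₁ sf * corr c₂ s₂ sf * corr c₁₂ s₁ s₂) / (1 - corr c₁₂ s₁ s₂ ^ 2)
        - corr ch sh sf ^ 2
      = (-(ch ^ 2 / sh)
          + (s₁ * c₂ ^ 2 + s₂ * c₁ ^ 2 - 2 * c₁ * c₂ * c₁₂) / (s₁ * s₂ - c₁₂ ^ 2)) / sf := by
  have hdet : 0 < s₁ * s₂ - c₁₂ ^ 2 := sub_pos.mpr (sq_lt_mul_of_corr_sq_lt_one hs₁ hs₂ hcorr)
  rw [mul_assoc 2, mul_assoc 2, corr_mul_corr_mul_corr c₁ c₂ c₁₂ hs₁.le hs₂.le hsf.le,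
    corr_sq c₁ hs₁.le hsf.le, corr_sq c₂ hs₂.le hsf.le, corr_sq c₁₂ hs₁.le hs₂.le,
    corr_sq ch hsh.le hsf.le]
  field_simp
  ring

end Pearson

theorem stmt_10_general (n : ℕ) (σ2 sf s1 s2 sh c1 c2 c12 ch : ℝ)
    (hsf : 0 < sf) (hs1 : 0 < s1) (hs2 : 0 < s2) (hsh : 0 < sh)
    (ρ1 ρ2 ρ12 ρfh : ℝ)
    (hρ1 : ρ1 = c1 / (Real.sqrt s1 * Real.sqrt sf))
    (hρ2 : ρ2 = c2 / (Real.sqrt s2 * Real.sqrt sf))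
    (hρ12 : ρ12 = c12 / (Real.sqrt s1 * Real.sqrt s2))
    (hρfh : ρfh = ch / (Real.sqrt sh * Real.sqrt sf))
    (hcorr : ρ12 ^ 2 < 1) :
    (σ2 / ((n : ℝ) - 1)
        ≥ -(ch ^ 2 / sh)
          + (s1 * c2 ^ 2 + s2 * c1 ^ 2 - 2 * c1 * c2 * c12) / (s1 * s2 - c12 ^ 2))
      ↔ σ2 / (sf * ((n : ℝ) - 1))
          ≥ (ρ1 ^ 2 + ρ2 ^ 2 - 2 * ρ1 * ρ2 * ρ12) / (1 - ρ12 ^ 2) - ρfh ^ 2 := by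
  have key := Pearson.corr_bias_gap_eq_div c1 c2 c12 ch hs1 hs2 hsh hsf (by rwa [hρ12] at hcorr)
  simp only [Pearson.corr, ← hρ1, ← hρ2, ← hρ12, ← hρfh] at key
  rw [key, mul_comm sf, ← div_div,
    ge_iff_le, ge_iff_le, div_le_div_iff_of_pos_right hsf]

/-- The asymptotic MSE of the bivariate regression is at most that of the univariate
(aggregated) regression, i.e. `Δ_var ≥ Δ_bias`, if and only if
`σ²/(σ²_f(n-1)) ≥ (ρ²_{φ₁,f} + ρ²_{φ₂,f} - 2ρ_{φ₁,f}ρ_{φ₂,f}ρ_{φ₁,φ₂})/(1 - ρ²_{φ₁,φ₂}) - ρ²_{f,h}`. -/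
theorem stmt_10 (n : ℕ) (hn : 2 ≤ n) (σ2 sf s1 s2 sh c1 c2 c12 ch : ℝ)
    (hsf : 0 < sf) (hs1 : 0 < s1) (hs2 : 0 < s2) (hsh : 0 < sh)
    (ρ1 ρ2 ρ12 ρfh : ℝ)
    (hρ1 : ρ1 = c1 / (Real.sqrt s1 * Real.sqrt sf))
    (hρ2 : ρ2 = c2 / (Real.sqrt s2 * Real.sqrt sf))
    (hρ12 : ρ12 = c12 / (Real.sqrt s1 * Real.sqrt s2))
    (hρfh : ρfh = ch / (Real.sqrt sh * Real.sqrt sf))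
    (hcorr : ρ12 ^ 2 < 1) :
    (σ2 / ((n : ℝ) - 1)
        ≥ -(ch ^ 2 / sh)
          + (s1 * c2 ^ 2 + s2 * c1 ^ 2 - 2 * c1 * c2 * c12) / (s1 * s2 - c12 ^ 2))
      ↔ σ2 / (sf * ((n : ℝ) - 1))
          ≥ (ρ1 ^ 2 + ρ2 ^ 2 - 2 * ρ1 * ρ2 * ρ12) / (1 - ρ12 ^ 2) - ρfh ^ 2 :=
  stmt_10_general n σ2 sf s1 s2 sh c1 c2 c12 ch hsf hs1 hs2 hsh ρ1 ρ2 ρ12 ρfh hρ1 hρ2 hρ12 hρfh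
    hcorr
end

section
/- In the linear case φ₁ = x₁, φ₂ = x₂, h = (x₁+x₂)/2, f = w₁x₁ + w₂x₂ with σ²_{x₁} = σ²_{x₂} = σ²_x, the condition σ²/(σ²_f(n−1)) ≥ R²_{f,x₁x₂} − R²_{f,h} is equivalent to ρ_{x₁,x₂} ≥ 1 − 2σ²/((n−1)(w₁−w₂)²σ²_x), when w₁ ≠ w₂. -/
/-!
Since `f` is itself a linear combination of `x₁, x₂`, its squared multiple correlation with
`(x₁, x₂)` is `1`, so the right-hand side is `1 - ρ²_{f,h}`. Writing
`σ²_f = σ²_x ((1-ρ)(w₁-w₂)² + (1+ρ)(w₁+w₂)²)/2`, the part of `σ²_f` explained by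
`h = (x₁+x₂)/2` is the `(w₁+w₂)²` term, so `1 - ρ²_{f,h} = σ²_x (1-ρ)(w₁-w₂)²/(2σ²_f)`, and the
condition becomes linear in `ρ`.
-/

lemma div_sqrt_mul_sqrt_mul_div {a b c d : ℝ} (ha : 0 ≤ a) (hb : 0 ≤ b) :
    c / (√a * √b) * (d / (√a * √b)) = c * d / (a * b) := by
  rw [div_mul_div_comm, mul_mul_mul_comm, Real.mul_self_sqrt ha, Real.mul_self_sqrt hb]

lemma div_sqrt_mul_sqrt_sq {a b c : ℝ} (ha : 0 ≤ a) (hb : 0 ≤ b) :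
    (c / (√a * √b)) ^ 2 = c ^ 2 / (a * b) := by
  rw [sq, sq, div_sqrt_mul_sqrt_mul_div ha hb]

lemma rSq_two_predictors_eq {a b c₁ c₂ ρ : ℝ} (ha : 0 ≤ a) (hb : 0 ≤ b) :
    ((c₁ / (√a * √b)) ^ 2 + (c₂ / (√a * √b)) ^ 2
        - 2 * (c₁ / (√a * √b)) * (c₂ / (√a * √b)) * ρ) / (1 - ρ ^ 2)
      = (c₁ ^ 2 + c₂ ^ 2 - 2 * c₁ * c₂ * ρ) / (a * b * (1 - ρ ^ 2)) := by
  have hnum : c₁ ^ 2 / (a * b) + c₂ ^ 2 / (a * b) - 2 * (c₁ * c₂ / (a * b)) * ρ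
      = (c₁ ^ 2 + c₂ ^ 2 - 2 * c₁ * c₂ * ρ) / (a * b) := by ring
  rw [div_sqrt_mul_sqrt_sq ha hb, div_sqrt_mul_sqrt_sq ha hb, mul_assoc 2,
    div_sqrt_mul_sqrt_mul_div ha hb, hnum, div_div]

lemma linear_variance_pos {s ρ w₁ w₂ : ℝ} (hs : 0 < s) (hρ : -1 ≤ ρ) (hρ' : ρ < 1)
    (hw : w₁ ≠ w₂) : 0 < w₁ ^ 2 * s + w₂ ^ 2 * s + 2 * w₁ * w₂ * (ρ * s) := by
  have hd : 0 < (w₁ - w₂) ^ 2 := sq_pos_of_ne_zero (sub_ne_zero.mpr hw)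
  have hdecomp : w₁ ^ 2 * s + w₂ ^ 2 * s + 2 * w₁ * w₂ * (ρ * s)
      = s * ((1 - ρ) * (w₁ - w₂) ^ 2 + (1 + ρ) * (w₁ + w₂) ^ 2) / 2 := by ring
  rw [hdecomp]
  have : 0 ≤ (1 + ρ) * (w₁ + w₂) ^ 2 := mul_nonneg (by linarith) (sq_nonneg _)
  have : 0 < (1 - ρ) * (w₁ - w₂) ^ 2 := mul_pos (by linarith) hd
  positivity

lemma aggregation_condition_iff {σ2 s ρ d m sf : ℝ} (hs : 0 < s) (hd : 0 < d) (hm : 0 < m)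
    (hsf : 0 < sf) :
    σ2 / (sf * m) ≥ s * (1 - ρ) * d / (2 * sf) ↔ ρ ≥ 1 - 2 * σ2 / (m * d * s) := by
  have hgap : s * (1 - ρ) * d / (2 * sf) = (1 - ρ) * (m * d * s) / 2 / (sf * m) := by
    field_simp
  rw [ge_iff_le, ge_iff_le, hgap, div_le_div_iff_of_pos_right (by positivity),
    div_le_iff₀ two_pos, sub_le_comm, le_div_iff₀ (by positivity), mul_comm σ2]

/-- Linear case `φ₁ = x₁, φ₂ = x₂, h = (x₁+x₂)/2, f = w₁x₁ + w₂x₂` with equal variances: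
the aggregation condition `σ²/(σ²_f(n-1)) ≥ R²_{f,x₁x₂} - R²_{f,h}` is equivalent to
`ρ_{x₁,x₂} ≥ 1 - 2σ²/((n-1)(w₁-w₂)²σ²_x)`. -/
theorem stmt_11 (n : ℕ) (hn : 2 ≤ n) (σ2 σx2 ρ w1 w2 : ℝ)
    (hσx : 0 < σx2) (hρ : -1 < ρ) (hρ' : ρ < 1) (hw : w1 ≠ w2)
    (c12 c1 c2 sf sh ch ρ1 ρ2 ρfh : ℝ)
    (hc12 : c12 = ρ * σx2)
    (hc1 : c1 = w1 * σx2 + w2 * c12)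
    (hc2 : c2 = w2 * σx2 + w1 * c12)
    (hsf : sf = w1 ^ 2 * σx2 + w2 ^ 2 * σx2 + 2 * w1 * w2 * c12)
    (hsh : sh = (σx2 + σx2 + 2 * c12) / 4)
    (hch : ch = (c1 + c2) / 2)
    (hρ1 : ρ1 = c1 / (Real.sqrt σx2 * Real.sqrt sf))
    (hρ2 : ρ2 = c2 / (Real.sqrt σx2 * Real.sqrt sf))
    (hρfh : ρfh = ch / (Real.sqrt sh * Real.sqrt sf)) :
    (σ2 / (sf * ((n : ℝ) - 1))
        ≥ (ρ1 ^ 2 + ρ2 ^ 2 - 2 * ρ1 * ρ2 * ρ) / (1 - ρ ^ 2) - ρfh ^ 2)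
      ↔ ρ ≥ 1 - 2 * σ2 / (((n : ℝ) - 1) * (w1 - w2) ^ 2 * σx2) := by
  have hsf_pos : 0 < sf := hsf ▸ hc12 ▸ linear_variance_pos hσx hρ.le hρ' hw
  have hsh_pos : 0 < sh := by rw [hsh, hc12]; nlinarith
  have hR2 : (ρ1 ^ 2 + ρ2 ^ 2 - 2 * ρ1 * ρ2 * ρ) / (1 - ρ ^ 2) = 1 := by
    have hnum : c1 ^ 2 + c2 ^ 2 - 2 * c1 * c2 * ρ = σx2 * sf * (1 - ρ ^ 2) := by
      subst_vars; ring
    have hρ_sq : 1 - ρ ^ 2 ≠ 0 := by nlinarith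
    rw [hρ1, hρ2, rSq_two_predictors_eq hσx.le hsf_pos.le, hnum,
      div_self (by positivity)]
  have hch_sq : ch ^ 2 = sh * (sf - σx2 * (1 - ρ) * (w1 - w2) ^ 2 / 2) := by
    subst_vars; ring
  have hgap : 1 - ρfh ^ 2 = σx2 * (1 - ρ) * (w1 - w2) ^ 2 / (2 * sf) := by
    rw [hρfh, div_sqrt_mul_sqrt_sq hsh_pos.le hsf_pos.le, hch_sq,
      mul_div_mul_left _ _ hsh_pos.ne', sub_div, div_self hsf_pos.ne']
    ring
  have hn1 : (0 : ℝ) < n - 1 := by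
    rw [sub_pos]; exact_mod_cast hn
  rw [hR2, hgap]
  exact aggregation_condition_iff hσx (sq_pos_of_ne_zero (sub_ne_zero.mpr hw)) hn1 hsf_pos
end

section
/- In the Gaussian linear bivariate case (features x₁, x₂ aggregated to x̄ = (x₁+x₂)/2, target y = w₁x₁ + w₂x₂ + ε, ε ~ N(0,σ²)), the asymptotic expected value E[y·(w₁x₁ + w₂x₂ − w̄·x̄)] with w̄ = 2(w₁σ²_{x₁} + w₂σ²_{x₂} + (w₁+w₂)cov(x₁,x₂))/(σ²_{x₁} + σ²_{x₂} + 2cov(x₁,x₂)) equals w₁²σ²_{x₁} + w₂²σ²_{x₂} + 2w₁w₂cov(x₁,x₂) − (w₁σ²_{x₁} + w₂σ²_{x₂} + (w₁+w₂)cov(x₁,x₂))²/(σ²_{x₁} + σ²_{x₂} + 2cov(x₁,x₂)). -/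
/-! The residual `w₁x₁ + w₂x₂ - w̄x̄ = b₁x₁ + b₂x₂` (with `bᵢ = wᵢ - w̄/2`) is centred, so the
expectation is the covariance of `y` with it. The noise is independent of `(x₁, x₂)` and drops
out, and bilinearity leaves `∑ wᵢ bⱼ Cov(xᵢ, xⱼ) = Q(w, w) - (w̄/2) K`, where `Q` is the quadratic
form of the covariance matrix and `K = w₁σ²₁ + w₂σ²₂ + (w₁ + w₂)cov`. As `w̄/2 = K/T`, this is
`Q(w, w) - K²/T`. -/

open MeasureTheory ProbabilityTheory

namespace ProbabilityTheory

variable {Ω : Type*} [MeasurableSpace Ω] {μ : Measure Ω} {X Y ε x₁ x₂ : Ω → ℝ}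

lemma integral_linear_comb_eq_zero (hx₁ : Integrable x₁ μ) (hx₂ : Integrable x₂ μ)
    (h₁ : ∫ ω, x₁ ω ∂μ = 0) (h₂ : ∫ ω, x₂ ω ∂μ = 0) (a₁ a₂ : ℝ) :
    ∫ ω, a₁ * x₁ ω + a₂ * x₂ ω ∂μ = 0 := by
  rw [integral_add (hx₁.const_mul a₁) (hx₂.const_mul a₂), integral_const_mul,
    integral_const_mul, h₁, h₂]
  ring

variable [IsProbabilityMeasure μ]

lemma integral_mul_eq_covariance_of_integral_eq_zero (hX : MemLp X 2 μ) (hY : MemLp Y 2 μ)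
    (hY₀ : ∫ ω, Y ω ∂μ = 0) : ∫ ω, X ω * Y ω ∂μ = cov[X, Y; μ] := by
  rw [covariance_eq_sub hX hY, hY₀, mul_zero, sub_zero]
  rfl

lemma covariance_add_indepFun_left (hX : MemLp X 2 μ) (hε : MemLp ε 2 μ) (hY : MemLp Y 2 μ)
    (h : IndepFun ε Y μ) : cov[fun ω ↦ X ω + ε ω, Y; μ] = cov[X, Y; μ] := by
  rw [show (fun ω ↦ X ω + ε ω) = X + ε from rfl, covariance_add_left hX hε hY,
    h.covariance_eq_zero hε hY, add_zero]

lemma covariance_linear_comb_linear_comb (hx₁ : MemLp x₁ 2 μ) (hx₂ : MemLp x₂ 2 μ)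
    (a₁ a₂ b₁ b₂ : ℝ) :
    cov[fun ω ↦ a₁ * x₁ ω + a₂ * x₂ ω, fun ω ↦ b₁ * x₁ ω + b₂ * x₂ ω; μ]
      = a₁ * b₁ * Var[x₁; μ] + (a₁ * b₂ + a₂ * b₁) * cov[x₁, x₂; μ]
        + a₂ * b₂ * Var[x₂; μ] := by
  have split (c₁ c₂ : ℝ) : (fun ω ↦ c₁ * x₁ ω + c₂ * x₂ ω)
      = (fun ω ↦ c₁ * x₁ ω) + fun ω ↦ c₂ * x₂ ω := rfl
  rw [split, split, covariance_add_left (hx₁.const_mul _) (hx₂.const_mul _)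
      ((hx₁.const_mul _).add (hx₂.const_mul _)),
    covariance_add_right (hx₁.const_mul _) (hx₁.const_mul _) (hx₂.const_mul _),
    covariance_add_right (hx₂.const_mul _) (hx₁.const_mul _) (hx₂.const_mul _)]
  simp only [covariance_const_mul_left, covariance_const_mul_right,
    covariance_self hx₁.aemeasurable, covariance_self hx₂.aemeasurable, covariance_comm x₂ x₁]
  ring

end ProbabilityTheory

theorem stmt_17_general {Ω : Type*} [MeasurableSpace Ω] (μ : Measure Ω) [IsProbabilityMeasure μ]
    (x1 x2 ε : Ω → ℝ) (w1 w2 : ℝ)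
    (hx1 : MemLp x1 2 μ) (hx2 : MemLp x2 2 μ) (hε : MemLp ε 2 μ)
    (hm1 : ∫ ω, x1 ω ∂μ = 0) (hm2 : ∫ ω, x2 ω ∂μ = 0)
    (hindep : ProbabilityTheory.IndepFun (fun ω => (x1 ω, x2 ω)) ε μ)
    (s1 s2 c T wbar : ℝ)
    (hs1 : s1 = variance x1 μ) (hs2 : s2 = variance x2 μ)
    (hc : c = ∫ ω, (x1 ω - ∫ ω', x1 ω' ∂μ) * (x2 ω - ∫ ω', x2 ω' ∂μ) ∂μ)
    (hwbar : wbar = 2 * (w1 * s1 + w2 * s2 + (w1 + w2) * c) / T) :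
    ∫ ω, (w1 * x1 ω + w2 * x2 ω + ε ω)
        * (w1 * x1 ω + w2 * x2 ω - wbar * ((x1 ω + x2 ω) / 2)) ∂μ
      = w1 ^ 2 * s1 + w2 ^ 2 * s2 + 2 * w1 * w2 * c
        - (w1 * s1 + w2 * s2 + (w1 + w2) * c) ^ 2 / T := by
  have hcov : c = cov[x1, x2; μ] := hc
  set b1 := w1 - wbar / 2
  set b2 := w2 - wbar / 2
  have hfit : MemLp (fun ω ↦ w1 * x1 ω + w2 * x2 ω) 2 μ :=
    (hx1.const_mul w1).add (hx2.const_mul w2)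
  have hres : MemLp (fun ω ↦ b1 * x1 ω + b2 * x2 ω) 2 μ :=
    (hx1.const_mul b1).add (hx2.const_mul b2)
  have hres_indep : IndepFun ε (fun ω ↦ b1 * x1 ω + b2 * x2 ω) μ :=
    (hindep.comp (φ := fun p : ℝ × ℝ ↦ b1 * p.1 + b2 * p.2) (by fun_prop) measurable_id).symm
  calc ∫ ω, (w1 * x1 ω + w2 * x2 ω + ε ω)
        * (w1 * x1 ω + w2 * x2 ω - wbar * ((x1 ω + x2 ω) / 2)) ∂μ
      = ∫ ω, (w1 * x1 ω + w2 * x2 ω + ε ω) * (b1 * x1 ω + b2 * x2 ω) ∂μ := by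
        congr 1 with ω; ring
    _ = w1 * b1 * s1 + (w1 * b2 + w2 * b1) * c + w2 * b2 * s2 := by
        rw [integral_mul_eq_covariance_of_integral_eq_zero
            (X := fun ω ↦ w1 * x1 ω + w2 * x2 ω + ε ω) (hfit.add hε) hres
            (integral_linear_comb_eq_zero (hx1.integrable one_le_two)
              (hx2.integrable one_le_two) hm1 hm2 b1 b2),
          covariance_add_indepFun_left hfit hε hres hres_indep,
          covariance_linear_comb_linear_comb hx1 hx2, hs1, hs2, hcov]
    _ = _ := by
        simp only [b1, b2, hwbar]
        ring

/-- Gaussian linear bivariate case: the asymptotic first expected value in the deviance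
computation, `E[y·(w₁x₁ + w₂x₂ - w̄·x̄)]` with
`w̄ = 2(w₁σ²_{x₁} + w₂σ²_{x₂} + (w₁+w₂)cov(x₁,x₂))/σ²_{x₁+x₂}`, equals
`w₁²σ²_{x₁} + w₂²σ²_{x₂} + 2w₁w₂cov(x₁,x₂) - (w₁σ²_{x₁} + w₂σ²_{x₂} + (w₁+w₂)cov(x₁,x₂))²/σ²_{x₁+x₂}`. -/
theorem stmt_17 {Ω : Type*} [MeasurableSpace Ω] (μ : Measure Ω) [IsProbabilityMeasure μ]
    (x1 x2 ε : Ω → ℝ) (w1 w2 : ℝ)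
    (hx1 : MemLp x1 2 μ) (hx2 : MemLp x2 2 μ) (hε : MemLp ε 2 μ)
    (hmx1 : Measurable x1) (hmx2 : Measurable x2) (hmε : Measurable ε)
    (hm1 : ∫ ω, x1 ω ∂μ = 0) (hm2 : ∫ ω, x2 ω ∂μ = 0) (hmeps : ∫ ω, ε ω ∂μ = 0)
    (hindep : ProbabilityTheory.IndepFun (fun ω => (x1 ω, x2 ω)) ε μ)
    (s1 s2 c T wbar : ℝ)
    (hs1 : s1 = variance x1 μ) (hs2 : s2 = variance x2 μ)
    (hc : c = ∫ ω, (x1 ω - ∫ ω', x1 ω' ∂μ) * (x2 ω - ∫ ω', x2 ω' ∂μ) ∂μ)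
    (hT : T = s1 + s2 + 2 * c) (hTpos : 0 < T)
    (hwbar : wbar = 2 * (w1 * s1 + w2 * s2 + (w1 + w2) * c) / T) :
    ∫ ω, (w1 * x1 ω + w2 * x2 ω + ε ω)
        * (w1 * x1 ω + w2 * x2 ω - wbar * ((x1 ω + x2 ω) / 2)) ∂μ
      = w1 ^ 2 * s1 + w2 ^ 2 * s2 + 2 * w1 * w2 * c
        - (w1 * s1 + w2 * s2 + (w1 + w2) * c) ^ 2 / T :=
  stmt_17_general μ x1 x2 ε w1 w2 hx1 hx2 hε hm1 hm2 hindep s1 s2 c T wbar hs1 hs2 hc hwbar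
end
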